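/- arXiv:1512.01412 — 2 statements merged into one kernel-verified Lean document; each statement's English description precedes it below -/
import Mathlib

section
/- Let n, q be coprime with 0 < q < n and n = bq + r with 0 < r < q. Define d(k) = ⌊kq/n⌋ mod 2. Then the sequence d consists of maximal constant blocks whose lengths take exactly two values, b and b+1; i.e., for every k, the length of the maximal constant run of d containing position k is either b or b+1. -/
/-!
Write `s(m) = m q mod n`. Since `q ≤ n`, `⌊m q / n⌋` grows by at most one per step, so the parity
`d` changes between `m` and `m + 1` exactly when `s(m + 1) < q`. From a position `i` with
`s = s(i) < q` the residues `s + q, s + 2q, …` stay at least `q` and below `n` until the first `L`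
with `s + L q ≥ n`, and then `s(i + L) = s + L q - n < q`. With `n = b q + r`, this `L` is `b + 1`
if `s < r` and `b` otherwise.
-/

namespace Nat

variable {n q : ℕ}

theorem div_mod_eq_of_le_of_lt_two_mul {x : ℕ} (hnx : n ≤ x) (hx : x < 2 * n) :
    x / n = 1 ∧ x % n = x - n := by
  refine ⟨Nat.div_eq_of_lt_le (by omega) (by omega), ?_⟩
  rw [Nat.mod_eq_sub_mod hnx, Nat.mod_eq_of_lt (by omega)]

theorem add_div_mod_two_ne_iff (hq : 0 < q) (hqn : q ≤ n) (a : ℕ) :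
    (a + q) / n % 2 ≠ a / n % 2 ↔ (a + q) % n < q := by
  have hn : 0 < n := hq.trans_le hqn
  have hsplit : a + q = n * (a / n) + (a % n + q) := by rw [← add_assoc, div_add_mod]
  have hs : a % n < n := mod_lt a hn
  rw [hsplit, mul_add_div hn, mul_add_mod]
  by_cases hcarry : a % n + q < n
  · rw [div_eq_of_lt hcarry, mod_eq_of_lt hcarry]
    omega
  · obtain ⟨hdiv, hmod⟩ := div_mod_eq_of_le_of_lt_two_mul (not_lt.mp hcarry) (by omega)
    rw [hdiv, hmod]
    omega

theorem succ_mul_div_mod_two_ne_iff (hq : 0 < q) (hqn : q ≤ n) (m : ℕ) :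
    (m + 1) * q / n % 2 ≠ m * q / n % 2 ↔ (m + 1) * q % n < q := by
  rw [Nat.succ_mul]
  exact add_div_mod_two_ne_iff hq hqn (m * q)

theorem le_add_mul_mod_of_add_mul_lt {a L m : ℕ} (hL : a % n + L * q < n + q) (hm0 : 0 < m)
    (hmL : m < L) : q ≤ (a + m * q) % n := by
  have hmq : q ≤ m * q := Nat.le_mul_of_pos_left q hm0
  have hmLq : m * q + q ≤ L * q := by rw [← Nat.succ_mul]; exact Nat.mul_le_mul_right q hmL
  rw [← mod_add_mod, mod_eq_of_lt (by omega)]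
  omega

theorem add_mul_mod_lt_of_mem_Ico {a L : ℕ} (hqn : q ≤ n)
    (hL : a % n + L * q ∈ Set.Ico n (n + q)) :
    (a + L * q) % n < q := by
  obtain ⟨hnL, hLn⟩ := hL
  rw [← mod_add_mod, (div_mod_eq_of_le_of_lt_two_mul hnL (by omega)).2]
  omega

theorem eq_of_forall_succ_eq {α : Type*} {f : ℕ → α} {i j : ℕ}
    (h : ∀ m, i ≤ m → m < j → f (m + 1) = f m) : ∀ m, i ≤ m → m ≤ j → f m = f i := by
  intro m him
  induction m, him using Nat.le_induction with
  | base => exact fun _ => rfl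
  | succ m him ih => exact fun hmj => (h m him hmj).trans (ih (by omega))

end Nat

theorem exists_add_mul_mem_Ico {n q b r s : ℕ} (hn : n = b * q + r) (hr : r < q) (hs : s < q) :
    ∃ L, (L = b ∨ L = b + 1) ∧ s + L * q ∈ Set.Ico n (n + q) := by
  by_cases hsr : s < r
  · exact ⟨b + 1, Or.inr rfl, by rw [Nat.succ_mul]; omega, by rw [Nat.succ_mul]; omega⟩
  · exact ⟨b, Or.inl rfl, by omega, by omega⟩

theorem exists_next_mul_mod_lt {n q b r i : ℕ} (hqn : q ≤ n) (hn : n = b * q + r) (hr : r < q)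
    (hi : i * q % n < q) :
    ∃ L, (L = b ∨ L = b + 1) ∧ 0 < L ∧ (∀ m, 0 < m → m < L → q ≤ (i + m) * q % n) ∧
      (i + L) * q % n < q := by
  obtain ⟨L, hLb, hL⟩ := exists_add_mul_mem_Ico hn hr hi
  have hs : i * q % n < n := Nat.mod_lt _ (by omega)
  have hL0 : 0 < L := Nat.pos_of_ne_zero fun h => by
    subst h
    simp only [zero_mul, add_zero, Set.mem_Ico] at hL
    omega
  refine ⟨L, hLb, hL0, fun m hm0 hmL => ?_, ?_⟩
  · rw [add_mul]
    exact Nat.le_add_mul_mod_of_add_mul_lt hL.2 hm0 hmL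
  · rw [add_mul]
    exact Nat.add_mul_mod_lt_of_mem_Ico hqn hL

theorem stmt14_general (n q b r : ℕ) (hq : 0 < q) (hqn : q < n)
    (hn : n = b * q + r) (hr : r < q) :
    ∀ k : ℕ, ∃ i j : ℕ, i ≤ k ∧ k ≤ j ∧
      (∀ m, i ≤ m → m ≤ j → m * q / n % 2 = i * q / n % 2) ∧
      (i = 0 ∨ (i - 1) * q / n % 2 ≠ i * q / n % 2) ∧
      ((j + 1) * q / n % 2 ≠ j * q / n % 2) ∧
      (j + 1 - i = b ∨ j + 1 - i = b + 1) := by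
  intro k
  have jump := Nat.succ_mul_div_mod_two_ne_iff hq hqn.le
  set i := Nat.findGreatest (fun m => m * q % n < q) k
  have hi : i * q % n < q :=
    Nat.findGreatest_spec (P := fun m => m * q % n < q) (Nat.zero_le k) (by simpa using hq)
  obtain ⟨L, hLb, hL0, hinner, hnext⟩ := exists_next_mul_mod_lt hqn.le hn hr hi
  obtain ⟨l, rfl⟩ := Nat.exists_eq_add_one_of_ne_zero hL0.ne'
  rw [← add_assoc] at hnext
  refine ⟨i, i + l, Nat.findGreatest_le k, ?_, ?_, ?_, (jump _).2 hnext, by omega⟩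
  · by_contra! hkj
    exact Nat.findGreatest_is_greatest (P := fun m => m * q % n < q) (by omega) hkj hnext
  · refine Nat.eq_of_forall_succ_eq fun m him hml => ?_
    have hstay := hinner (m + 1 - i) (by omega) (by omega)
    rw [show i + (m + 1 - i) = m + 1 by omega] at hstay
    exact not_not.mp fun h => ((jump m).1 h).not_ge hstay
  · rcases Nat.eq_zero_or_pos i with h | h
    · exact Or.inl h
    · obtain ⟨p, hp⟩ := Nat.exists_eq_add_one_of_ne_zero h.ne'
      rw [hp] at hi ⊢
      exact Or.inr ((jump p).2 hi).symm

/-- with n = b*q + r, 0 < r < q, the maximal constant run of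
d(k) = ⌊kq/n⌋ mod 2 containing any position k has length b or b+1. -/
theorem stmt14 (n q b r : ℕ) (hq : 0 < q) (hqn : q < n)
    (hcop : Nat.Coprime q n) (hn : n = b * q + r) (hr0 : 0 < r) (hr : r < q) :
    ∀ k : ℕ, ∃ i j : ℕ, i ≤ k ∧ k ≤ j ∧
      (∀ m, i ≤ m → m ≤ j → m * q / n % 2 = i * q / n % 2) ∧
      (i = 0 ∨ (i - 1) * q / n % 2 ≠ i * q / n % 2) ∧
      ((j + 1) * q / n % 2 ≠ j * q / n % 2) ∧
      (j + 1 - i = b ∨ j + 1 - i = b + 1) :=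
  stmt14_general n q b r hq hqn hn hr
end

section
/- Let n, q be coprime with 0 < q < n and n = bq + r with 0 < r < q. The length sequences S_j = (L((j − kr) mod q))_{k=0}^{q−1} for shifts j = 0, 1, …, q−1 are exactly the q cyclic rotations of S_0; moreover S_{j+1} differs from S_j by a single transposition of two adjacent entries (a b and a b+1 swap places, cyclically). -/
/-!
Since `n ≡ r (mod q)` and `gcd(n, q) = 1`, `r` is a unit of `ZMod q`. Hence every shift `j` is
`-p r` for some `p`, and `S_j(k) = L(j - k r) = L(-(k + p) r) = S_0(k + p)`.

Passing from `j` to `j + 1` replaces `L(j - k r)` by `L((j - k r) + 1)`. The step function `L`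
is unchanged by `a ↦ a + 1` except at its two jumps `a = r - 1` (from `b + 1` to `b`) and
`a = -1` (from `b` to `b + 1`). These differ by `r`, so they are hit at two consecutive
positions `k = t` and `k = t + 1`, where the values `b + 1, b` become `b, b + 1`.
-/

namespace ZMod

variable {q : ℕ}

lemma val_add_one_of_ne_neg_one [NeZero q] {a : ZMod q} (ha : a ≠ -1) :
    (a + 1).val = a.val + 1 := by
  have hlt : a.val + 1 < q := by
    refine lt_of_le_of_ne (val_lt a) fun h => ha ?_
    have : a + 1 = 0 := by
      rw [← natCast_zmod_val a, ← Nat.cast_one, ← Nat.cast_add, h, natCast_self]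
    exact eq_neg_of_add_eq_zero_left this
  rw [← val_cast_of_lt hlt, Nat.cast_succ, natCast_zmod_val]

lemma val_add_one_lt_iff [NeZero q] {r : ℕ} (hr0 : 0 < r) {a : ZMod q}
    (ha₁ : a ≠ r - 1) (ha₂ : a ≠ -1) : (a + 1).val < r ↔ a.val < r := by
  have hval : a.val ≠ r - 1 := fun h => ha₁ <| by
    rw [← natCast_zmod_val a, h, Nat.cast_sub hr0, Nat.cast_one]
  rw [val_add_one_of_ne_neg_one ha₂]
  omega

lemma val_natCast_sub_one {r : ℕ} (hr0 : 0 < r) (hr : r ≤ q) :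
    ((r : ZMod q) - 1).val = r - 1 := by
  rw [← Nat.cast_one, ← Nat.cast_sub hr0, val_cast_of_lt (by omega)]

lemma eq_of_natCast_eq_of_lt {k t : ℕ} (hk : k < q) (ht : t < q) (h : (k : ZMod q) = t) :
    k = t := by
  simpa [val_cast_of_lt hk, val_cast_of_lt ht] using congrArg val h

lemma exists_lt_natCast_mul_eq [NeZero q] {u : ZMod q} (hu : IsUnit u) (x : ZMod q) :
    ∃ p < q, (p : ZMod q) * u = x :=
  ⟨(x * hu.unit⁻¹).val, val_lt _, by
    rw [natCast_zmod_val, mul_assoc, hu.val_inv_mul, mul_one]⟩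

lemma exists_forall_apply_sub_natCast_mul {α : Type*} [NeZero q] {u : ZMod q} (hu : IsUnit u)
    (f : ZMod q → α) (j : ZMod q) :
    ∃ p : ℕ, ∀ k : ℕ, f (j - k * u) = f (0 - (k + p : ℕ) * u) := by
  obtain ⟨p, -, hp⟩ := exists_lt_natCast_mul_eq hu (-j)
  exact ⟨p, fun k => by push_cast; congr 1; linear_combination hp⟩

lemma apply_add_one_sub_mul_eq {α : Type*} {f : ZMod q → α} {u c : ZMod q} (hu : IsUnit u)
    (hf : ∀ x, x ≠ c → x ≠ c - u → f (x + 1) = f x) {j κ k : ZMod q}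
    (hκ : j - κ * u = c) (hk₁ : k ≠ κ) (hk₂ : k ≠ κ + 1) :
    f (j + 1 - k * u) = f (j - k * u) := by
  rw [show j + 1 - k * u = j - k * u + 1 by ring]
  refine hf _ (fun h => hk₁ (hu.mul_right_cancel ?_)) (fun h => hk₂ (hu.mul_right_cancel ?_))
  · linear_combination hκ - h
  · linear_combination hκ - h

end ZMod

lemma exists_adjacent_swap {q b r : ℕ} [NeZero q] (hr0 : 0 < r) (hr : r < q)
    (hu : IsUnit (r : ZMod q)) {L : ZMod q → ℕ}
    (hL : ∀ a : ZMod q, L a = if a.val < r then b + 1 else b) {S : ℕ → ℕ → ℕ}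
    (hS : ∀ j k, S j k = L (j - k * r)) (j : ℕ) :
    ∃ t < q, S (j + 1) t = S j ((t + 1) % q) ∧
        S (j + 1) ((t + 1) % q) = S j t ∧
        S j t ≠ S j ((t + 1) % q) ∧
        ∀ k < q, k ≠ t → k ≠ (t + 1) % q → S (j + 1) k = S j k := by
  obtain ⟨t, htq, ht⟩ := ZMod.exists_lt_natCast_mul_eq hu (j - (r - 1))
  have hmod : (((t + 1) % q : ℕ) : ZMod q) = t + 1 := by push_cast [ZMod.natCast_mod]; rfl
  have hL₁ : L (r - 1) = b + 1 := by
    rw [hL, ZMod.val_natCast_sub_one hr0 hr.le, if_pos (by omega)]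
  have hL₂ : L (-1) = b := by
    have : (-1 : ZMod q) = (q : ZMod q) - 1 := by rw [ZMod.natCast_self, zero_sub]
    rw [hL, this, ZMod.val_natCast_sub_one (by omega) le_rfl, if_neg (by omega)]
  have hL₃ : L r = b := by rw [hL, ZMod.val_cast_of_lt hr, if_neg (lt_irrefl r)]
  have hL₄ : L 0 = b + 1 := by rw [hL, ZMod.val_zero, if_pos hr0]
  have e₁ : (j : ZMod q) - t * r = r - 1 := by linear_combination -ht
  have e₂ : (j : ZMod q) - (t + 1) * r = -1 := by linear_combination -ht
  have e₃ : (j : ZMod q) + 1 - t * r = r := by linear_combination -ht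
  have e₄ : (j : ZMod q) + 1 - (t + 1) * r = 0 := by linear_combination -ht
  refine ⟨t, htq, ?_, ?_, ?_, fun k hk hkt hkt' => ?_⟩
  · rw [hS, hS, hmod, Nat.cast_succ, e₃, e₂, hL₂, hL₃]
  · rw [hS, hS, hmod, Nat.cast_succ, e₁, e₄, hL₁, hL₄]
  · rw [hS, hS, hmod, e₁, e₂, hL₁, hL₂]; omega
  rw [hS, hS, Nat.cast_succ]
  refine ZMod.apply_add_one_sub_mul_eq hu (c := (r : ZMod q) - 1) (fun x h₁ h₂ => ?_) e₁ ?_ ?_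
  · rw [sub_sub_cancel_left] at h₂
    simp only [hL, ZMod.val_add_one_lt_iff hr0 h₁ h₂]
  · exact fun h => hkt (ZMod.eq_of_natCast_eq_of_lt hk htq h)
  · rw [← hmod]
    exact fun h => hkt' (ZMod.eq_of_natCast_eq_of_lt hk (Nat.mod_lt _ (by omega)) h)

theorem stmt17_general (n q b r : ℕ)
    (hcop : Nat.Coprime n q) (hn : n = b * q + r) (hr0 : 0 < r) (hr : r < q)
    (L : ZMod q → ℕ) (hL : ∀ a : ZMod q, L a = if a.val < r then b + 1 else b)
    (S : ℕ → ℕ → ℕ)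
    (hS : ∀ j k, S j k = L ((j : ZMod q) - ((k * r : ℕ) : ZMod q))) :
    (∀ j, ∃ p, ∀ k, S j k = S 0 (k + p)) ∧
    (∀ j, ∃ t < q, S (j + 1) t = S j ((t + 1) % q) ∧
        S (j + 1) ((t + 1) % q) = S j t ∧
        S j t ≠ S j ((t + 1) % q) ∧
        ∀ k < q, k ≠ t → k ≠ (t + 1) % q → S (j + 1) k = S j k) := by
  have : NeZero q := ⟨by omega⟩
  have hu : IsUnit (r : ZMod q) :=
    (ZMod.isUnit_iff_coprime r q).mpr ((Nat.coprime_mul_right_add_left r q b).mp (hn ▸ hcop))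
  simp only [Nat.cast_mul] at hS
  refine ⟨fun j => ?_, exists_adjacent_swap hr0 hr hu hL hS⟩
  obtain ⟨p, hp⟩ := ZMod.exists_forall_apply_sub_natCast_mul hu L j
  exact ⟨p, fun k => by rw [hS, hS, hp, Nat.cast_zero]⟩

/-- the shifted length sequences S_j(k) = L(j − k·r) are each a
cyclic rotation of S_0, and consecutive ones differ by a single transposition
of two cyclically adjacent entries (of distinct values b and b+1). -/
theorem stmt17 (n q b r : ℕ) (hq : 0 < q) (hqn : q < n)
    (hcop : Nat.Coprime n q) (hn : n = b * q + r) (hr0 : 0 < r) (hr : r < q)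
    (L : ZMod q → ℕ) (hL : ∀ a : ZMod q, L a = if a.val < r then b + 1 else b)
    (S : ℕ → ℕ → ℕ)
    (hS : ∀ j k, S j k = L ((j : ZMod q) - ((k * r : ℕ) : ZMod q))) :
    (∀ j, ∃ p, ∀ k, S j k = S 0 (k + p)) ∧
    (∀ j, ∃ t < q, S (j + 1) t = S j ((t + 1) % q) ∧
        S (j + 1) ((t + 1) % q) = S j t ∧
        S j t ≠ S j ((t + 1) % q) ∧
        ∀ k < q, k ≠ t → k ≠ (t + 1) % q → S (j + 1) k = S j k) :=
  stmt17_general n q b r hcop hn hr0 hr L hL S hS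
end
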